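/- arXiv:2301.07994 — 2 statements merged into one kernel-verified Lean document; each statement's English description precedes it below -/
import Mathlib

section
/- Let $f: \mathbb{S}^{d-1} \to \mathbb{R}$ be strictly positive Lipschitz, and for $g \in \mathrm{Lip}(\mathbb{S}^{d-1})$ define $V_g(y) = \frac{g(\omega_y)}{f(\omega_y)} y$ on $\Omega_f$ with $V_g(0)=0$. Then the volume-change functional satisfies $\int_{\Omega_f} \mathrm{div}\left(\frac{g(\omega_y)}{f(\omega_y)} y\right) dy = \int_{\mathbb{S}^{d-1}} g(\omega) f^{d-1}(\omega)\, d\omega$. -/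
open Metric Set MeasureTheory Filter Topology

/-! The integrand is the divergence of `h • id` with `h = (g / f) ∘ normalize` homogeneous of
degree `0`. Wherever `h` is differentiable, Euler's identity `Dh(y) y = 0` gives
`div (h • id) = d h`; by Rademacher this holds almost everywhere, because `normalize` is Lipschitz
on every shell `{a ≤ ‖y‖}`. In polar coordinates `y = r ω` the integral of `d h` over `Ω_f` is
`∫_𝕊 ∫_0^{f ω} d (g ω / f ω) r^(d-1) dr dω = ∫_𝕊 g f^(d-1)`. -/

namespace NormedSpace

section Normalize

variable {E : Type*} [NormedAddCommGroup E] [NormedSpace ℝ E]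

theorem normalize_mem_sphere {x : E} (hx : x ≠ 0) : normalize x ∈ sphere (0 : E) 1 :=
  mem_sphere_zero_iff_norm.2 (norm_normalize hx)

theorem norm_normalize_le_one (x : E) : ‖normalize x‖ ≤ 1 := by
  rcases eq_or_ne x 0 with rfl | hx
  · simp
  · exact (norm_normalize hx).le

theorem norm_normalize_sub_normalize_le {x : E} (hx : x ≠ 0) (y : E) :
    ‖normalize x - normalize y‖ ≤ 2 * ‖x - y‖ / ‖x‖ := by
  have hx' : 0 < ‖x‖ := norm_pos_iff.2 hx
  have hdecomp : normalize x - normalize y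
      = ‖x‖⁻¹ • ((x - y) + (‖y‖ - ‖x‖) • normalize y) := by
    rw [sub_smul, norm_smul_normalize, sub_add_sub_cancel, smul_sub, smul_smul,
      inv_mul_cancel₀ hx'.ne', one_smul, normalize]
  calc ‖normalize x - normalize y‖
      ≤ ‖x‖⁻¹ * (‖x - y‖ + |‖y‖ - ‖x‖| * ‖normalize y‖) := by
        rw [hdecomp, norm_smul, norm_inv, norm_norm, ← Real.norm_eq_abs, ← norm_smul]
        gcongr
        exact norm_add_le _ _
    _ ≤ ‖x‖⁻¹ * (‖x - y‖ + ‖x - y‖ * 1) := by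
        gcongr
        · rw [norm_sub_rev x y]; exact abs_norm_sub_norm_le y x
        · exact norm_normalize_le_one y
    _ = 2 * ‖x - y‖ / ‖x‖ := by ring

theorem lipschitzOnWith_normalize {a : ℝ} (ha : 0 < a) :
    LipschitzOnWith (2 / a).toNNReal normalize {z : E | a ≤ ‖z‖} := by
  refine LipschitzOnWith.of_dist_le' fun x hx y _ => ?_
  have hx0 : x ≠ 0 := norm_pos_iff.1 (ha.trans_le hx)
  calc dist (normalize x) (normalize y) ≤ 2 * ‖x - y‖ / ‖x‖ := by
        rw [dist_eq_norm]; exact norm_normalize_sub_normalize_le hx0 y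
    _ ≤ 2 * ‖x - y‖ / a := by gcongr; exact hx
    _ = 2 / a * dist x y := by rw [dist_eq_norm]; ring

theorem continuousOn_normalize : ContinuousOn (normalize : E → E) {0}ᶜ :=
  (continuousOn_id.norm.inv₀ fun _ hx => norm_ne_zero_iff.2 hx).smul continuousOn_id

theorem _root_.ContinuousOn.comp_normalize {X : Type*} [TopologicalSpace X] {φ : E → X}
    (hφ : ContinuousOn φ (sphere 0 1)) : ContinuousOn (φ ∘ normalize) {0}ᶜ :=
  hφ.comp continuousOn_normalize fun _ hx => normalize_mem_sphere hx

def starDomain (ρ : E → ℝ) : Set E := {y | y = 0 ∨ ‖y‖ < ρ (normalize y)}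

theorem smul_mem_starDomain_iff {ρ : E → ℝ} {ω : E} (hω : ω ∈ sphere (0 : E) 1) {r : ℝ}
    (hr : 0 < r) : r • ω ∈ starDomain ρ ↔ r < ρ ω := by
  rw [mem_sphere_zero_iff_norm] at hω
  simp [starDomain, hr.ne', normalize_smul_of_pos hr, normalize_eq_self_of_norm_eq_one hω,
    norm_smul, abs_of_pos hr, hω, ne_zero_of_norm_ne_zero (hω.trans_ne one_ne_zero)]

theorem isOpen_starDomain_diff_zero {ρ : E → ℝ} (hρ : ContinuousOn ρ (sphere 0 1)) :
    IsOpen (starDomain ρ \ {0}) := by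
  have hset : starDomain ρ \ {0} = {0}ᶜ ∩ (fun y => ρ (normalize y) - ‖y‖) ⁻¹' Ioi 0 := by
    ext y
    by_cases hy : y = 0 <;> simp [starDomain, hy]
  rw [hset]
  exact (hρ.comp_normalize.sub continuousOn_id.norm).isOpen_inter_preimage
    isOpen_compl_singleton isOpen_Ioi

theorem measurableSet_starDomain [MeasurableSpace E] [OpensMeasurableSpace E] {ρ : E → ℝ}
    (hρ : ContinuousOn ρ (sphere 0 1)) : MeasurableSet (starDomain ρ) := by
  have hzero : {(0 : E)} ⊆ starDomain ρ := singleton_subset_iff.2 (Or.inl rfl)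
  rw [← sdiff_union_of_subset hzero]
  exact (isOpen_starDomain_diff_zero hρ).measurableSet.union (measurableSet_singleton 0)

end Normalize

section Trace

variable {E F : Type*} [NormedAddCommGroup E] [NormedSpace ℝ E]
  [NormedAddCommGroup F] [NormedSpace ℝ F]

theorem _root_.DifferentiableAt.fderiv_apply_self_eq_zero {h : E → F} {x : E}
    (hd : DifferentiableAt ℝ h x) (hhom : ∀ᶠ t in 𝓝 (1 : ℝ), h (t • x) = h x) :
    fderiv ℝ h x x = 0 := by
  have hray : HasDerivAt (fun t : ℝ => h (t • x)) (fderiv ℝ h x x) 1 := by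
    have hline : HasDerivAt (fun t : ℝ => t • x) x 1 := by
      simpa using (hasDerivAt_id (1 : ℝ)).smul_const x
    exact hd.hasFDerivAt.comp_hasDerivAt_of_eq 1 hline (one_smul ℝ x).symm
  exact hray.unique ((hasDerivAt_const (1 : ℝ) (h x)).congr_of_eventuallyEq hhom)

theorem trace_fderiv_smul_self [FiniteDimensional ℝ E] {h : E → ℝ} {x : E}
    (hd : DifferentiableAt ℝ h x) (hhom : ∀ᶠ t in 𝓝 (1 : ℝ), h (t • x) = h x) :
    LinearMap.trace ℝ E (fderiv ℝ (fun z => h z • z) x) = Module.finrank ℝ E * h x := by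
  have hderiv : fderiv ℝ (fun z => h z • z) x
      = h x • ContinuousLinearMap.id ℝ E + (fderiv ℝ h x).smulRight x :=
    (hd.hasFDerivAt.smul (hasFDerivAt_id x)).fderiv
  rw [hderiv]
  simp [hd.fderiv_apply_self_eq_zero hhom, mul_comm]

theorem trace_fderiv_comp_normalize_smul_self [FiniteDimensional ℝ E] {φ : E → ℝ} {x : E}
    (hd : DifferentiableAt ℝ (φ ∘ normalize) x) :
    LinearMap.trace ℝ E (fderiv ℝ (fun z => φ (normalize z) • z) x)
      = Module.finrank ℝ E * φ (normalize x) :=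
  trace_fderiv_smul_self hd <| (eventually_gt_nhds one_pos).mono fun t ht => by
    simp [normalize_smul_of_pos ht]

end Trace

section Rademacher

variable {E F : Type*} [NormedAddCommGroup E] [NormedSpace ℝ E] [FiniteDimensional ℝ E]
  [MeasurableSpace E] [BorelSpace E] [NormedAddCommGroup F] [NormedSpace ℝ F]
  [FiniteDimensional ℝ F] (μ : Measure E) [μ.IsAddHaarMeasure]

theorem _root_.LipschitzOnWith.ae_differentiableAt_of_isOpen {K : NNReal} {f : E → F}
    {s : Set E} (hf : LipschitzOnWith K f s) (hs : IsOpen s) :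
    ∀ᵐ x ∂μ, x ∈ s → DifferentiableAt ℝ f x := by
  filter_upwards [hf.ae_differentiableWithinAt_of_mem] with x hx hxs
  exact (hx hxs).differentiableAt (hs.mem_nhds hxs)

theorem _root_.LipschitzOnWith.ae_differentiableAt_comp_normalize {K : NNReal} {h : E → F}
    (hh : LipschitzOnWith K h (sphere 0 1)) :
    ∀ᵐ x ∂μ, x ≠ 0 → DifferentiableAt ℝ (h ∘ normalize) x := by
  have hshell (n : ℕ) : ∀ᵐ x ∂μ, x ∈ {z : E | 1 / ((n : ℝ) + 1) < ‖z‖} →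
      DifferentiableAt ℝ (h ∘ normalize) x := by
    have hn : (0 : ℝ) < 1 / ((n : ℝ) + 1) := by positivity
    have hmaps : MapsTo normalize {z : E | 1 / ((n : ℝ) + 1) ≤ ‖z‖} (sphere 0 1) :=
      fun z hz => normalize_mem_sphere (norm_pos_iff.1 (hn.trans_le hz))
    exact ((hh.comp (lipschitzOnWith_normalize hn) hmaps).mono fun _ hz => le_of_lt hz)
      |>.ae_differentiableAt_of_isOpen μ (isOpen_lt continuous_const continuous_norm)
  filter_upwards [ae_all_iff.2 hshell] with x hx hx0
  obtain ⟨n, hn⟩ := exists_nat_one_div_lt (norm_pos_iff.2 hx0)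
  exact hx n hn

end Rademacher

theorem _root_.MeasureTheory.integral_indicator_Iio_volumeIoiPow (n : ℕ) (a : Ioi (0 : ℝ))
    (c : ℝ) :
    ∫ r, (Iio a).indicator (fun _ => c) r ∂Measure.volumeIoiPow n
      = (a : ℝ) ^ (n + 1) / (n + 1) * c := by
  rw [integral_indicator_const _ measurableSet_Iio, measureReal_def,
    Measure.volumeIoiPow_apply_Iio, ENNReal.toReal_ofReal (by have := a.2.out; positivity),
    smul_eq_mul]

section Polar

variable {E : Type*} [NormedAddCommGroup E] [NormedSpace ℝ E] [FiniteDimensional ℝ E]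
  [MeasurableSpace E] [BorelSpace E] [Nontrivial E] (μ : Measure E) [μ.IsAddHaarMeasure]

theorem integral_eq_integral_sphere_integral_volumeIoiPow {F : E → ℝ}
    (hF : Integrable F μ) :
    ∫ y, F y ∂μ = ∫ ω : sphere (0 : E) 1, ∫ r : Ioi (0 : ℝ), F ((r : ℝ) • (ω : E))
      ∂Measure.volumeIoiPow (Module.finrank ℝ E - 1) ∂μ.toSphere := by
  have hmp := μ.measurePreserving_homeomorphUnitSphereProd
  have hemb := (homeomorphUnitSphereProd E).measurableEmbedding
  set G : sphere (0 : E) 1 × Ioi (0 : ℝ) → ℝ := fun p => F ((p.2 : ℝ) • (p.1 : E))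
  have hGF : G ∘ homeomorphUnitSphereProd E = F ∘ (↑) := funext fun x => by
    simp [G, ← homeomorphUnitSphereProd_symm_apply_coe]
  have hG : Integrable G (μ.toSphere.prod (Measure.volumeIoiPow (Module.finrank ℝ E - 1))) := by
    rw [← hmp.integrable_comp_emb hemb, hGF,
      ← integrableOn_iff_comap_subtypeVal (measurableSet_singleton 0).compl]
    exact hF.integrableOn
  calc ∫ y, F y ∂μ = ∫ x : ({0}ᶜ : Set E), F x ∂μ.comap Subtype.val := by
        rw [integral_subtype_comap (measurableSet_singleton 0).compl, restrict_compl_singleton]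
    _ = ∫ p, G p ∂(μ.toSphere.prod (Measure.volumeIoiPow (Module.finrank ℝ E - 1))) := by
        rw [← hmp.integral_comp hemb G, ← Function.comp_def G, hGF]; rfl
    _ = _ := integral_prod G hG

theorem integrableOn_starDomain_comp_normalize {φ ρ : E → ℝ}
    (hφ : ContinuousOn φ (sphere 0 1)) (hρ : ContinuousOn ρ (sphere 0 1)) :
    IntegrableOn (fun y => φ (normalize y)) (starDomain ρ) μ := by
  obtain ⟨C, hC⟩ := (isCompact_sphere (0 : E) 1).exists_bound_of_continuousOn hρ
  obtain ⟨M, hM⟩ := (isCompact_sphere (0 : E) 1).exists_bound_of_continuousOn hφ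
  have hbdd : starDomain ρ ⊆ closedBall 0 |C| := by
    rintro y (rfl | hy)
    · simp
    rcases eq_or_ne y 0 with rfl | hy0
    · simp
    rw [mem_closedBall_zero_iff]
    calc ‖y‖ ≤ ρ (normalize y) := hy.le
      _ ≤ |C| := (Real.le_norm_self _).trans ((hC _ (normalize_mem_sphere hy0)).trans
          (le_abs_self C))
  have hmeas : AEStronglyMeasurable (fun y => φ (normalize y)) μ := by
    rw [← restrict_compl_singleton (μ := μ) 0]
    exact hφ.comp_normalize.aestronglyMeasurable (measurableSet_singleton 0).compl
  refine Measure.integrableOn_of_bounded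
    (measure_mono hbdd |>.trans_lt measure_closedBall_lt_top).ne hmeas (M := M) ?_
  filter_upwards [ae_restrict_of_ae (μ.ae_ne 0)] with y hy
  exact hM _ (normalize_mem_sphere hy)

theorem setIntegral_starDomain_comp_normalize {φ ρ : E → ℝ}
    (hφ : ContinuousOn φ (sphere 0 1)) (hρ : ContinuousOn ρ (sphere 0 1))
    (hρpos : ∀ ω ∈ sphere (0 : E) 1, 0 < ρ ω) :
    ∫ y in starDomain ρ, φ (normalize y) ∂μ
      = ∫ ω : sphere (0 : E) 1, ρ ω ^ Module.finrank ℝ E / Module.finrank ℝ E * φ ω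
          ∂μ.toSphere := by
  have hd : Module.finrank ℝ E - 1 + 1 = Module.finrank ℝ E :=
    Nat.sub_add_cancel Module.finrank_pos
  rw [← integral_indicator (measurableSet_starDomain hρ),
    integral_eq_integral_sphere_integral_volumeIoiPow μ
      ((integrableOn_starDomain_comp_normalize μ hφ hρ).integrable_indicator
        (measurableSet_starDomain hρ))]
  congr 1 with ω
  have hray : (fun r : Ioi (0 : ℝ) =>
        (starDomain ρ).indicator (fun y => φ (normalize y)) ((r : ℝ) • (ω : E)))
      = (Iio ⟨ρ ω, hρpos ω ω.2⟩).indicator (fun _ => φ ω) := by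
    ext r
    by_cases hr : (r : ℝ) < ρ ω
    · rw [indicator_of_mem ((smul_mem_starDomain_iff ω.2 r.2).2 hr),
        indicator_of_mem (show r ∈ Iio ⟨ρ ω, hρpos ω ω.2⟩ from hr), normalize_smul_of_pos r.2,
        normalize_eq_self_of_norm_eq_one (norm_eq_of_mem_sphere ω)]
    · rw [indicator_of_notMem (mt (smul_mem_starDomain_iff ω.2 r.2).1 hr),
        indicator_of_notMem (show r ∉ Iio ⟨ρ ω, hρpos ω ω.2⟩ from hr)]
  rw [hray, integral_indicator_Iio_volumeIoiPow, ← Nat.cast_add_one, hd]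

end Polar

section DivergenceTheorem

variable {E : Type*} [NormedAddCommGroup E] [NormedSpace ℝ E] [FiniteDimensional ℝ E]
  [MeasurableSpace E] [BorelSpace E] (μ : Measure E) [μ.IsAddHaarMeasure]

theorem setIntegral_starDomain_trace_fderiv_div_smul_self {f g : E → ℝ}
    (hfpos : ∀ ω ∈ sphere (0 : E) 1, 0 < f ω) {Kf Kg : NNReal}
    (hflip : LipschitzOnWith Kf f (sphere 0 1)) (hglip : LipschitzOnWith Kg g (sphere 0 1)) :
    ∫ y in starDomain f,
        LinearMap.trace ℝ E (fderiv ℝ (fun z => (g (normalize z) / f (normalize z)) • z) y) ∂μ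
      = ∫ ω : sphere (0 : E) 1, g ω * f ω ^ (Module.finrank ℝ E - 1) ∂μ.toSphere := by
  rcases subsingleton_or_nontrivial E with hE | hE
  · rw [μ.toSphere_eq_zero_iff.2 hE, integral_zero_measure]
    simp [Subsingleton.elim _ (0 : E →ₗ[ℝ] E)]
  set d := Module.finrank ℝ E
  have htrace : ∀ᵐ y ∂μ, LinearMap.trace ℝ E
      (fderiv ℝ (fun z => (g (normalize z) / f (normalize z)) • z) y)
        = d * (g / f) (normalize y) := by
    filter_upwards [μ.ae_ne 0, hglip.ae_differentiableAt_comp_normalize μ,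
      hflip.ae_differentiableAt_comp_normalize μ] with y hy hgy hfy
    exact trace_fderiv_comp_normalize_smul_self (φ := g / f)
      ((hgy hy).mul ((hfy hy).inv (hfpos _ (normalize_mem_sphere hy)).ne'))
  have hcont : ContinuousOn (fun ω => d * (g / f) ω) (sphere 0 1) :=
    continuousOn_const.mul <|
      hglip.continuousOn.div hflip.continuousOn fun ω hω => (hfpos ω hω).ne'
  rw [setIntegral_congr_ae (measurableSet_starDomain hflip.continuousOn)
      (htrace.mono fun _ h _ => h),
    setIntegral_starDomain_comp_normalize μ hcont hflip.continuousOn hfpos]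
  refine integral_congr_ae (ae_of_all _ fun ω => ?_)
  obtain ⟨n, hn⟩ := Nat.exists_eq_add_one_of_ne_zero (Module.finrank_pos (R := ℝ) (M := E)).ne'
  have hf := (hfpos ω ω.2).ne'
  simp only [d, hn, Pi.div_apply]
  field_simp
  push_cast
  ring

end DivergenceTheorem

end NormedSpace

/-- The volume-change identity for star-shaped domains: for a strictly
positive Lipschitz radial function `f` on the unit sphere and Lipschitz `g`, the integral
over `Ω_f` of the divergence of the radial field `y ↦ (g(ω_y)/f(ω_y)) y` equals
`∫_{𝕊^{d-1}} g f^{d-1}` with respect to the surface measure on the sphere. Divergence is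
the trace of the Jacobian. -/
theorem divergence_radial_field_eq_sphere_integral {d : ℕ}
    (f g : EuclideanSpace ℝ (Fin d) → ℝ)
    (hfpos : ∀ ω ∈ sphere (0 : EuclideanSpace ℝ (Fin d)) 1, 0 < f ω)
    (Kf : NNReal) (hflip : LipschitzOnWith Kf f (sphere (0 : EuclideanSpace ℝ (Fin d)) 1))
    (Kg : NNReal) (hglip : LipschitzOnWith Kg g (sphere (0 : EuclideanSpace ℝ (Fin d)) 1)) :
    (∫ y in {x : EuclideanSpace ℝ (Fin d) | x = 0 ∨ ‖x‖ < f (‖x‖⁻¹ • x)},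
        LinearMap.trace ℝ (EuclideanSpace ℝ (Fin d))
          ((fderiv ℝ (fun z : EuclideanSpace ℝ (Fin d) =>
              (g (‖z‖⁻¹ • z) / f (‖z‖⁻¹ • z)) • z) y) :
            EuclideanSpace ℝ (Fin d) →ₗ[ℝ] EuclideanSpace ℝ (Fin d)))
      = ∫ ω : sphere (0 : EuclideanSpace ℝ (Fin d)) 1,
          g (ω : EuclideanSpace ℝ (Fin d)) * f (ω : EuclideanSpace ℝ (Fin d)) ^ (d - 1)
          ∂((volume : Measure (EuclideanSpace ℝ (Fin d))).toSphere) := by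
  have h := NormedSpace.setIntegral_starDomain_trace_fderiv_div_smul_self volume hfpos hflip hglip
  rwa [finrank_euclideanSpace_fin] at h
end

section
/- Let $J'(f)$ be a finite signed Radon measure on $\mathbb{S}^1$, $f > 0$ Lipschitz, $g$ a minimiser of $v \mapsto \langle J'(f), v\rangle$ over $\{v \in \mathrm{Lip}_1(\mathbb{S}^1) : \int_{\mathbb{S}^1} f v = 0\}$, and $g_h$ a minimiser over $\mathcal{S}_h \cap \mathrm{Lip}_1(\mathbb{S}^1)$ with $\int_{\mathbb{S}^1} f g_h = 0$, where $\mathcal{S}_h$ is the space of continuous piecewise-linear finite elements on a partition of $\mathbb{S}^1$ of maximal element length $h$. Then there exists $C > 0$ independent of $h$ such that $\langle J'(f), g\rangle \leq \langle J'(f), g_h\rangle \leq \langle J'(f), g\rangle + C h \|J'(f)\|_{\mathcal{M}}$. -/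
/-!
The first inequality holds because `g_h` is admissible for the problem that `g` solves. For the
second, the piecewise-linear interpolant of `g` on the mesh is again `1`-Lipschitz (its slopes are
difference quotients of `g`) and lies within `2h` of `g`. Subtracting its `f`-weighted mean restores
the constraint `∫ f v = 0` and moves it by at most `2h` more, because `g` has `f`-weighted mean
zero. The resulting competitor `v ∈ 𝒮_h` satisfies `|v - g| ≤ 4h`, so by minimality of `g_h`,
`⟨J'(f), g_h⟩ ≤ ⟨J'(f), v⟩ ≤ ⟨J'(f), g⟩ + 4h‖J'(f)‖_ℳ`.
-/

open MeasureTheory Set Real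

/-- The pairing `⟨ρ, v⟩ = ∫ v dρ` of a signed measure on `ℝ` with a function, via the
Jordan decomposition. -/
noncomputable def pairingR (ρ : SignedMeasure ℝ) (v : ℝ → ℝ) : ℝ :=
  (∫ t, v t ∂ρ.toJordanDecomposition.posPart)
    - ∫ t, v t ∂ρ.toJordanDecomposition.negPart

theorem LipschitzWith.abs_slope_le {g : ℝ → ℝ} {K : NNReal} (hg : LipschitzWith K g)
    (a b : ℝ) : |slope g a b| ≤ K := by
  rw [slope_def_field, abs_div]
  exact div_le_of_le_mul₀ (abs_nonneg _) K.coe_nonneg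
    (by simpa [Real.dist_eq] using hg.dist_le_mul b a)

/-- Written as a sum of one ramp per element, so that its Lipschitz bound telescopes
(`sum_ramp_eq`). -/
noncomputable def pwLinInterp (x : ℕ → ℝ) (g : ℝ → ℝ) (n : ℕ) (t : ℝ) : ℝ :=
  g (x 0) + ∑ i ∈ Finset.range n,
    slope g (x i) (x (i + 1)) * (max (x i) (min t (x (i + 1))) - x i)

section PwLinInterp

variable {x : ℕ → ℝ} {g : ℝ → ℝ}

theorem sum_ramp_eq (hx : Monotone x) (n : ℕ) (t : ℝ) :
    ∑ i ∈ Finset.range n, (max (x i) (min t (x (i + 1))) - x i)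
      = max (x 0) (min t (x n)) - x 0 := by
  induction n with
  | zero => simp
  | succ n ih =>
    rw [Finset.sum_range_succ, ih]
    have h0n : x 0 ≤ x n := hx n.zero_le
    have hn : x n ≤ x (n + 1) := hx n.le_succ
    rcases le_total t (x n) with ht | ht
    · rw [min_eq_left ht, min_eq_left (ht.trans hn), max_eq_left ht]
      ring
    · rw [min_eq_right ht, max_eq_right h0n, max_eq_right (le_min ht hn),
        max_eq_right (h0n.trans (le_min ht hn))]
      ring

theorem pwLinInterp_succ (n : ℕ) (t : ℝ) :
    pwLinInterp x g (n + 1) t = pwLinInterp x g n t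
      + slope g (x n) (x (n + 1)) * (max (x n) (min t (x (n + 1))) - x n) := by
  simp only [pwLinInterp, Finset.sum_range_succ]
  ring

theorem pwLinInterp_sub_le {K : NNReal} (hx : Monotone x) (hg : LipschitzWith K g) (n : ℕ)
    {s t : ℝ} (hst : s ≤ t) : |pwLinInterp x g n t - pwLinInterp x g n s| ≤ K * (t - s) := by
  have hclamp : max (x 0) (min t (x n)) - max (x 0) (min s (x n)) ≤ t - s := by grind
  have hramp : ∀ i, 0 ≤ max (x i) (min t (x (i + 1))) - max (x i) (min s (x (i + 1))) :=
    fun i => sub_nonneg.2 (max_le_max le_rfl (min_le_min hst le_rfl))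
  calc |pwLinInterp x g n t - pwLinInterp x g n s|
      = |∑ i ∈ Finset.range n, slope g (x i) (x (i + 1))
          * (max (x i) (min t (x (i + 1))) - max (x i) (min s (x (i + 1))))| := by
        simp only [pwLinInterp, add_sub_add_left_eq_sub, ← Finset.sum_sub_distrib, ← mul_sub,
          sub_sub_sub_cancel_right]
    _ ≤ ∑ i ∈ Finset.range n, K
          * (max (x i) (min t (x (i + 1))) - max (x i) (min s (x (i + 1)))) := by
        refine (Finset.abs_sum_le_sum_abs _ _).trans (Finset.sum_le_sum fun i _ => ?_)
        rw [abs_mul, abs_of_nonneg (hramp i)]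
        exact mul_le_mul_of_nonneg_right (hg.abs_slope_le _ _) (hramp i)
    _ = K * (max (x 0) (min t (x n)) - max (x 0) (min s (x n))) := by
        rw [← Finset.mul_sum, ← sub_sub_sub_cancel_right _ _ (x 0), ← sum_ramp_eq hx,
          ← sum_ramp_eq hx, ← Finset.sum_sub_distrib]
        simp only [sub_sub_sub_cancel_right]
    _ ≤ K * (t - s) := mul_le_mul_of_nonneg_left hclamp K.coe_nonneg

theorem lipschitzWith_pwLinInterp {K : NNReal} (hx : Monotone x) (hg : LipschitzWith K g)
    (n : ℕ) : LipschitzWith K (pwLinInterp x g n) := by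
  refine LipschitzWith.of_le_add_mul K fun s t => ?_
  rcases le_total s t with hst | hts
  · have := pwLinInterp_sub_le hx hg n hst
    rw [Real.dist_eq, abs_sub_comm, abs_of_nonneg (sub_nonneg.2 hst)]
    linarith [neg_abs_le (pwLinInterp x g n t - pwLinInterp x g n s)]
  · have := pwLinInterp_sub_le hx hg n hts
    rw [Real.dist_eq, abs_of_nonneg (sub_nonneg.2 hts)]
    linarith [le_abs_self (pwLinInterp x g n s - pwLinInterp x g n t)]

theorem pwLinInterp_eq_of_le_node (hx : Monotone x) {m n : ℕ} (hmn : m ≤ n) {t : ℝ}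
    (ht : t ≤ x m) : pwLinInterp x g n t = pwLinInterp x g m t := by
  induction n, hmn using Nat.le_induction with
  | base => rfl
  | succ n hmn ih =>
    have htn : t ≤ x n := ht.trans (hx hmn)
    rw [pwLinInterp_succ, ih, min_eq_left (htn.trans (hx n.le_succ)), max_eq_left htn]
    ring

theorem pwLinInterp_eq_of_node_le (hx : Monotone x) {m : ℕ} {t : ℝ} (ht : x m ≤ t) :
    pwLinInterp x g m t = g (x m) := by
  induction m with
  | zero => simp [pwLinInterp]
  | succ m ih =>
    have hm : x m ≤ x (m + 1) := hx m.le_succ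
    rw [pwLinInterp_succ, ih (hm.trans ht), min_eq_right ht, max_eq_right hm, mul_comm,
      ← smul_eq_mul, sub_smul_slope, vsub_eq_sub]
    ring

theorem pwLinInterp_node (hx : Monotone x) {k n : ℕ} (hkn : k ≤ n) :
    pwLinInterp x g n (x k) = g (x k) := by
  rw [pwLinInterp_eq_of_le_node hx hkn le_rfl, pwLinInterp_eq_of_node_le hx le_rfl]

theorem pwLinInterp_eq_of_mem_Icc (hx : Monotone x) {k n : ℕ} (hkn : k < n) {t : ℝ}
    (ht : t ∈ Icc (x k) (x (k + 1))) :
    pwLinInterp x g n t = g (x k) + slope g (x k) (x (k + 1)) * (t - x k) := by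
  rw [pwLinInterp_eq_of_le_node hx hkn ht.2, pwLinInterp_succ, pwLinInterp_eq_of_node_le hx ht.1,
    min_eq_left ht.2, max_eq_right ht.1]

theorem abs_pwLinInterp_sub_le_of_mem_Icc {K : NNReal} (hx : Monotone x) (hg : LipschitzWith K g)
    {k n : ℕ} (hkn : k < n) {t : ℝ} (ht : t ∈ Icc (x k) (x (k + 1))) :
    |pwLinInterp x g n t - g t| ≤ 2 * K * (x (k + 1) - x k) := by
  have hgt : |g (x k) - g t| ≤ K * (t - x k) := by
    simpa [Real.dist_eq, abs_sub_comm (x k) t, abs_of_nonneg (sub_nonneg.2 ht.1)]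
      using hg.dist_le_mul (x k) t
  have hslope : |slope g (x k) (x (k + 1)) * (t - x k)| ≤ K * (t - x k) := by
    rw [abs_mul, abs_of_nonneg (sub_nonneg.2 ht.1)]
    exact mul_le_mul_of_nonneg_right (hg.abs_slope_le _ _) (sub_nonneg.2 ht.1)
  rw [pwLinInterp_eq_of_mem_Icc hx hkn ht, add_sub_right_comm]
  calc _ ≤ K * (t - x k) + K * (t - x k) := (abs_add_le _ _).trans (add_le_add hgt hslope)
    _ ≤ 2 * K * (x (k + 1) - x k) := by nlinarith [K.coe_nonneg, ht.2]

theorem exists_mem_Icc_node {n : ℕ} (hn : 0 < n) {t : ℝ}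
    (ht : t ∈ Icc (x 0) (x n)) : ∃ k < n, t ∈ Icc (x k) (x (k + 1)) := by
  induction n with
  | zero => exact absurd hn (lt_irrefl 0)
  | succ n ih =>
    by_cases h : 0 < n ∧ t ≤ x n
    · obtain ⟨k, hk, hkt⟩ := ih h.1 ⟨ht.1, h.2⟩
      exact ⟨k, hk.trans n.lt_succ_self, hkt⟩
    · refine ⟨n, n.lt_succ_self, ?_, ht.2⟩
      rcases n.eq_zero_or_pos with rfl | hpos
      · exact ht.1
      · exact (not_le.1 fun h' => h ⟨hpos, h'⟩).le

theorem abs_pwLinInterp_sub_le {K : NNReal} (hx : Monotone x) (hg : LipschitzWith K g)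
    {n : ℕ} (hn : 0 < n) {h : ℝ} (hmesh : ∀ k < n, x (k + 1) - x k ≤ h) {t : ℝ}
    (ht : t ∈ Icc (x 0) (x n)) : |pwLinInterp x g n t - g t| ≤ 2 * K * h := by
  obtain ⟨k, hk, hkt⟩ := exists_mem_Icc_node hn ht
  exact (abs_pwLinInterp_sub_le_of_mem_Icc hx hg hk hkt).trans
    (mul_le_mul_of_nonneg_left (hmesh k hk) (by positivity))

end PwLinInterp

theorem Function.Periodic.dist_le_of_le_add_period {α : Type*} [PseudoMetricSpace α]
    {F : ℝ → α} {T : ℝ} {K : NNReal} (hF : Function.Periodic F T) (hT : 0 < T)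
    (hlip : LipschitzOnWith K F (Icc 0 T)) {s t : ℝ} (hst : s ≤ t) (hts : t ≤ s + T) :
    dist (F s) (F t) ≤ K * (t - s) := by
  have hlip' : ∀ a ∈ Icc 0 T, ∀ b ∈ Icc 0 T, a ≤ b →
      dist (F a) (F b) ≤ K * (b - a) := by
    intro a ha b hb hab
    have := hlip.dist_le_mul a ha b hb
    rwa [Real.dist_eq, abs_sub_comm, abs_of_nonneg (sub_nonneg.2 hab)] at this
  set m := ⌊s / T⌋
  have hs : s - m * T ∈ Ico 0 T :=
    ⟨Int.sub_floor_div_mul_nonneg s hT, Int.sub_floor_div_mul_lt s hT⟩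
  rw [← hF.sub_int_mul_eq m (x := s), ← hF.sub_int_mul_eq m (x := t),
    show t - s = (t - m * T) - (s - m * T) by ring]
  have hst' : s - m * T ≤ t - m * T := by linarith
  rcases le_total (t - m * T) T with ht | ht
  · exact hlip' _ (Ico_subset_Icc_self hs) _ ⟨hs.1.trans hst', ht⟩ hst'
  · -- past `T` the path is continued from `0`, since `F T = F 0`
    have h0T : F T = F 0 := by simpa using hF 0
    calc dist (F (s - m * T)) (F (t - m * T))
        ≤ dist (F (s - m * T)) (F T) + dist (F 0) (F (t - m * T - T)) := by
          rw [← h0T, hF.sub_eq]; exact dist_triangle _ _ _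
      _ ≤ K * (T - (s - m * T)) + K * (t - m * T - T - 0) := by
          gcongr
          · exact hlip' _ (Ico_subset_Icc_self hs) _ ⟨hT.le, le_rfl⟩ hs.2.le
          · exact hlip' _ ⟨le_rfl, hT.le⟩ _ ⟨by linarith, by linarith [hs.2]⟩ (by linarith)
      _ = K * ((t - m * T) - (s - m * T)) := by ring

theorem Function.Periodic.lipschitzWith_of_lipschitzOnWith {α : Type*} [PseudoMetricSpace α]
    {F : ℝ → α} {T : ℝ} {K : NNReal} (hF : Function.Periodic F T) (hT : 0 < T)
    (hlip : LipschitzOnWith K F (Icc 0 T)) : LipschitzWith K F := by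
  refine LipschitzWith.of_dist_le_mul fun s t => ?_
  wlog hst : s ≤ t generalizing s t
  · rw [dist_comm, dist_comm s]; exact this t s (le_of_not_ge hst)
  set n := ⌊(t - s) / T⌋₊
  have hn : n * T ≤ t - s :=
    (le_div_iff₀ hT).1 (Nat.floor_le (div_nonneg (sub_nonneg.2 hst) hT.le))
  have hn' : t - s < (n + 1) * T := (div_lt_iff₀ hT).1 (Nat.lt_floor_add_one _)
  rw [← hF.nat_mul n s, Real.dist_eq, abs_sub_comm, abs_of_nonneg (sub_nonneg.2 hst)]
  calc dist (F (s + n * T)) (F t) ≤ K * (t - (s + n * T)) :=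
        hF.dist_le_of_le_add_period hT hlip (by linarith) (by linarith)
    _ ≤ K * (t - s) := by gcongr; linarith [mul_nonneg n.cast_nonneg hT.le]

theorem exists_periodic_eqOn_Icc {α : Type*} {F : ℝ → α} {T : ℝ} (hT : 0 < T)
    (hF : F 0 = F T) :
    ∃ w : ℝ → α, Function.Periodic w T ∧ EqOn w F (Icc 0 T) := by
  refine ⟨fun t => F (toIcoMod hT 0 t), fun t => by simp only [toIcoMod_add_right], ?_⟩
  rintro t ⟨ht0, htT⟩
  rcases htT.lt_or_eq with htT | rfl
  · simp only [(toIcoMod_eq_self hT).2 ⟨ht0, by simpa using htT⟩]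
  · simpa [hF] using congrArg F (toIcoMod_apply_right hT 0)

theorem exists_periodic_pwLinear_approx {n : ℕ} (hn : 0 < n) {θ : Fin (n + 1) → ℝ}
    (hθ : Monotone θ) (hθ0 : θ 0 = 0) {T : ℝ} (hT : 0 < T) (hθT : θ (Fin.last n) = T)
    {h : ℝ} (hmesh : ∀ i : Fin n, θ i.succ - θ i.castSucc ≤ h) {g : ℝ → ℝ}
    {K : NNReal} (hgT : Function.Periodic g T) (hg : LipschitzWith K g) :
    ∃ w : ℝ → ℝ, Function.Periodic w T ∧ LipschitzWith K w ∧
      (∀ i : Fin n, ∃ a b : ℝ, ∀ t ∈ Icc (θ i.castSucc) (θ i.succ), w t = a * t + b) ∧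
      ∀ t, |w t - g t| ≤ 2 * K * h := by
  set x : ℕ → ℝ := fun k => θ (Fin.clamp k n)
  have hx : Monotone x := fun k l hkl =>
    hθ (by simpa [Fin.le_def] using min_le_min_right n hkl)
  have hx0 : x 0 = 0 := (congrArg θ (Fin.ext (by simp))).trans hθ0
  have hxn : x n = T := by simpa [x, Fin.clamp, Fin.last] using hθT
  have hxi : ∀ i : Fin n, x i = θ i.castSucc ∧ x (i + 1) = θ i.succ := fun i =>
    ⟨congrArg θ (Fin.ext (by simp [i.isLt.le])), congrArg θ (Fin.ext (by simp [i.isLt]))⟩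
  have hI0T : pwLinInterp x g n 0 = pwLinInterp x g n T := by
    rw [← hx0, ← hxn, pwLinInterp_node hx n.zero_le, pwLinInterp_node hx le_rfl, hx0, hxn,
      hgT.eq]
  obtain ⟨w, hwT, hwI⟩ := exists_periodic_eqOn_Icc hT hI0T
  have hIcc : ∀ i : Fin n, Icc (θ i.castSucc) (θ i.succ) ⊆ Icc 0 T := fun i =>
    Icc_subset_Icc (hθ0 ▸ hθ (Fin.zero_le _)) (hθT ▸ hθ (Fin.le_last _))
  refine ⟨w, hwT, hwT.lipschitzWith_of_lipschitzOnWith hT fun s hs t ht => ?_, fun i => ?_,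
    fun t => ?_⟩
  · rw [hwI hs, hwI ht]
    exact lipschitzWith_pwLinInterp hx hg n |>.lipschitzOnWith hs ht
  · refine ⟨slope g (x i) (x (i + 1)), g (x i) - slope g (x i) (x (i + 1)) * x i,
      fun t ht => ?_⟩
    rw [hwI (hIcc i ht),
      pwLinInterp_eq_of_mem_Icc hx i.isLt (by rwa [(hxi i).1, (hxi i).2])]
    ring
  · have ht' : t - toIcoDiv hT 0 t • T ∈ Ico 0 T := by
      rw [self_sub_toIcoDiv_zsmul]; exact toIcoMod_mem_Ico' hT t
    rw [← hwT.sub_zsmul_eq (toIcoDiv hT 0 t), ← hgT.sub_zsmul_eq (toIcoDiv hT 0 t),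
      hwI (Ico_subset_Icc_self ht')]
    refine abs_pwLinInterp_sub_le hx hg hn (fun k hk => ?_)
      (by rw [hx0, hxn]; exact Ico_subset_Icc_self ht')
    simpa [(hxi ⟨k, hk⟩).1, (hxi ⟨k, hk⟩).2] using hmesh ⟨k, hk⟩

theorem exists_integral_mul_sub_const_eq_zero {α : Type*} [MeasurableSpace α] {μ : Measure α}
    {f w g : α → ℝ} {δ : ℝ} (hf : Integrable f μ) (hf0 : ∀ a, 0 ≤ f a)
    (hfpos : 0 < ∫ a, f a ∂μ) (hfw : Integrable (fun a => f a * w a) μ)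
    (hfg : Integrable (fun a => f a * g a) μ) (hg : ∫ a, f a * g a ∂μ = 0)
    (hwg : ∀ a, |w a - g a| ≤ δ) :
    ∃ c, |c| ≤ δ ∧ ∫ a, f a * (w a - c) ∂μ = 0 := by
  refine ⟨(∫ a, f a * w a ∂μ) / ∫ a, f a ∂μ, ?_, ?_⟩
  · have hfwg : ∫ a, f a * w a ∂μ = ∫ a, f a * (w a - g a) ∂μ := by
      simp only [mul_sub, integral_sub hfw hfg, hg, sub_zero]
    have hbound : |∫ a, f a * (w a - g a) ∂μ| ≤ ∫ a, δ * f a ∂μ :=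
      norm_integral_le_of_norm_le (f := fun a => f a * (w a - g a)) (hf.const_mul δ)
        (ae_of_all _ fun a => by
          rw [Real.norm_eq_abs, abs_mul, abs_of_nonneg (hf0 a), mul_comm δ]
          exact mul_le_mul_of_nonneg_left (hwg a) (hf0 a))
    rw [abs_div, abs_of_pos hfpos, div_le_iff₀ hfpos, hfwg, ← integral_const_mul]
    exact hbound
  · simp only [mul_sub, integral_sub hfw (hf.mul_const _), integral_mul_const]
    field_simp [hfpos.ne']
    ring

theorem abs_pairingR_le (ρ : SignedMeasure ℝ) {φ : ℝ → ℝ} {δ : ℝ}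
    (hφ : ∀ t, |φ t| ≤ δ) :
    |pairingR ρ φ| ≤ δ * (ρ.totalVariation univ).toReal := by
  have hbound : ∀ (μ : Measure ℝ) [IsFiniteMeasure μ],
      |∫ t, φ t ∂μ| ≤ δ * μ.real univ :=
    fun μ _ => norm_integral_le_of_norm_le_const (f := φ) (ae_of_all μ hφ)
  rw [SignedMeasure.totalVariation, Measure.add_apply,
    ENNReal.toReal_add (measure_ne_top _ _) (measure_ne_top _ _), mul_add]
  exact (abs_sub _ _).trans (add_le_add (hbound _) (hbound _))

theorem pairingR_sub (ρ : SignedMeasure ℝ) {u v : ℝ → ℝ}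
    (hu : Integrable u ρ.totalVariation) (hv : Integrable v ρ.totalVariation) :
    pairingR ρ (fun t => u t - v t) = pairingR ρ u - pairingR ρ v := by
  simp only [pairingR, integral_sub hu.left_of_add_measure hv.left_of_add_measure,
    integral_sub hu.right_of_add_measure hv.right_of_add_measure]
  ring

theorem Function.Periodic.integrable_of_continuous {μ : Measure ℝ} [IsFiniteMeasure μ]
    {u : ℝ → ℝ} {T : ℝ} (hu : Function.Periodic u T) (hT : T ≠ 0) (hc : Continuous u) :
    Integrable u μ := by
  obtain ⟨C, hC⟩ := isBounded_iff_forall_norm_le.1 (hu.isBounded_of_continuous hT hc)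
  exact Integrable.of_bound hc.aestronglyMeasurable C (ae_of_all _ fun t => hC _ ⟨t, rfl⟩)

theorem fem_descent_estimate_circle_general
    (ρ : SignedMeasure ℝ)
    (f : ℝ → ℝ) (hfpos : ∀ t, 0 < f t)
    (Kf : NNReal) (hflip : LipschitzWith Kf f) :
    ∃ C > (0 : ℝ), ∀ h > (0 : ℝ), ∀ (n : ℕ), 0 < n → ∀ θ : Fin (n + 1) → ℝ,
      StrictMono θ → θ 0 = 0 → θ (Fin.last n) = 2 * π →
      (∀ i : Fin n, θ i.succ - θ i.castSucc ≤ h) →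
      ∀ g gh : ℝ → ℝ,
      -- `g` is a continuous minimiser
      (Function.Periodic g (2 * π) ∧ LipschitzWith 1 g ∧
        (∫ t in Ico 0 (2 * π), f t * g t) = 0) →
      (∀ v : ℝ → ℝ, Function.Periodic v (2 * π) → LipschitzWith 1 v →
        (∫ t in Ico 0 (2 * π), f t * v t) = 0 → pairingR ρ g ≤ pairingR ρ v) →
      -- `g_h` is a minimiser over the piecewise-linear finite element space `𝒮_h`
      (Function.Periodic gh (2 * π) ∧ LipschitzWith 1 gh ∧
        (∫ t in Ico 0 (2 * π), f t * gh t) = 0 ∧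
        (∀ i : Fin n, ∃ a b : ℝ, ∀ t ∈ Icc (θ i.castSucc) (θ i.succ),
          gh t = a * t + b)) →
      (∀ v : ℝ → ℝ, Function.Periodic v (2 * π) → LipschitzWith 1 v →
        (∫ t in Ico 0 (2 * π), f t * v t) = 0 →
        (∀ i : Fin n, ∃ a b : ℝ, ∀ t ∈ Icc (θ i.castSucc) (θ i.succ),
          v t = a * t + b) →
        pairingR ρ gh ≤ pairingR ρ v) →
      pairingR ρ g ≤ pairingR ρ gh ∧
        pairingR ρ gh ≤ pairingR ρ g
          + C * h * (ρ.totalVariation Set.univ).toReal := by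
  refine ⟨4, by norm_num, fun h _ n hn θ hθ hθ0 hθT hmesh g gh ⟨hgT, hg, hfg⟩ hgmin
    ⟨hghT, hgh, hfgh, _⟩ hghmin => ⟨hgmin gh hghT hgh hfgh, ?_⟩⟩
  have hT : 0 < 2 * π := by positivity
  obtain ⟨w, hwT, hw, hwpw, hwg⟩ :=
    exists_periodic_pwLinear_approx hn hθ.monotone hθ0 hT hθT hmesh hgT hg
  have hint : ∀ u : ℝ → ℝ, Continuous u → IntegrableOn u (Ico 0 (2 * π)) :=
    fun u hu => hu.integrableOn_Icc.mono_set Ico_subset_Icc_self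
  have hfpos' : 0 < ∫ t in Ico 0 (2 * π), f t :=
    (integral_pos_iff_support_of_nonneg (fun t => (hfpos t).le) (hint f hflip.continuous)).2
      (by simp [Function.support_eq_univ fun t => (hfpos t).ne', pi_pos])
  obtain ⟨c, hc, hfwc⟩ := exists_integral_mul_sub_const_eq_zero (hint f hflip.continuous)
    (fun t => (hfpos t).le) hfpos' (hint _ (hflip.continuous.mul hw.continuous))
    (hint _ (hflip.continuous.mul hg.continuous)) hfg (by simpa using hwg)
  have hvg : ∀ t, |w t - c - g t| ≤ 4 * h := fun t => by
    calc |w t - c - g t| ≤ |w t - g t| + |c| := by rw [sub_right_comm]; exact abs_sub _ _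
      _ ≤ 4 * h := by linarith [show |w t - g t| ≤ 2 * h by simpa using hwg t]
  have hvmin : pairingR ρ gh ≤ pairingR ρ (fun t => w t - c) := by
    refine hghmin _ (fun t => by simp only [hwT t]) ?_ hfwc fun i => ?_
    · simpa using hw.sub (LipschitzWith.const c)
    · obtain ⟨a, b, hab⟩ := hwpw i
      exact ⟨a, b - c, fun t ht => by rw [hab t ht]; ring⟩
  have hv_int : Integrable (fun t => w t - c) ρ.totalVariation :=
    (hwT.integrable_of_continuous hT.ne' hw.continuous).sub (integrable_const c)
  have hg_int := hgT.integrable_of_continuous hT.ne' hg.continuous (μ := ρ.totalVariation)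
  calc pairingR ρ gh ≤ pairingR ρ (fun t => w t - c) := hvmin
    _ = pairingR ρ g + pairingR ρ (fun t => (w t - c) - g t) := by
        rw [pairingR_sub ρ hv_int hg_int]; ring
    _ ≤ pairingR ρ g + 4 * h * (ρ.totalVariation univ).toReal :=
        add_le_add le_rfl ((le_abs_self _).trans (abs_pairingR_le ρ hvg))

/-- FEM approximation of the steepest descent on `𝕊¹` (modelled by
`2π`-periodic functions on `ℝ`): if `g` minimises `v ↦ ⟨J'(f), v⟩` over
`{v ∈ Lip₁(𝕊¹) : ∫ f v = 0}` and `g_h` minimises it over the continuous piecewise-linear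
finite element functions in that set, on a partition of maximal element length `h`, then
`⟨J'(f), g⟩ ≤ ⟨J'(f), g_h⟩ ≤ ⟨J'(f), g⟩ + C h ‖J'(f)‖_ℳ` with `C` independent of `h`. -/
theorem fem_descent_estimate_circle
    (ρ : SignedMeasure ℝ) (hρsupp : ρ.restrict (Ico 0 (2 * π)) = ρ)
    (f : ℝ → ℝ) (hfper : Function.Periodic f (2 * π)) (hfpos : ∀ t, 0 < f t)
    (Kf : NNReal) (hflip : LipschitzWith Kf f) :
    ∃ C > (0 : ℝ), ∀ h > (0 : ℝ), ∀ (n : ℕ), 0 < n → ∀ θ : Fin (n + 1) → ℝ,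
      StrictMono θ → θ 0 = 0 → θ (Fin.last n) = 2 * π →
      (∀ i : Fin n, θ i.succ - θ i.castSucc ≤ h) →
      ∀ g gh : ℝ → ℝ,
      -- `g` is a continuous minimiser
      (Function.Periodic g (2 * π) ∧ LipschitzWith 1 g ∧
        (∫ t in Ico 0 (2 * π), f t * g t) = 0) →
      (∀ v : ℝ → ℝ, Function.Periodic v (2 * π) → LipschitzWith 1 v →
        (∫ t in Ico 0 (2 * π), f t * v t) = 0 → pairingR ρ g ≤ pairingR ρ v) →
      -- `g_h` is a minimiser over the piecewise-linear finite element space `𝒮_h`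
      (Function.Periodic gh (2 * π) ∧ LipschitzWith 1 gh ∧
        (∫ t in Ico 0 (2 * π), f t * gh t) = 0 ∧
        (∀ i : Fin n, ∃ a b : ℝ, ∀ t ∈ Icc (θ i.castSucc) (θ i.succ),
          gh t = a * t + b)) →
      (∀ v : ℝ → ℝ, Function.Periodic v (2 * π) → LipschitzWith 1 v →
        (∫ t in Ico 0 (2 * π), f t * v t) = 0 →
        (∀ i : Fin n, ∃ a b : ℝ, ∀ t ∈ Icc (θ i.castSucc) (θ i.succ),
          v t = a * t + b) →
        pairingR ρ gh ≤ pairingR ρ v) →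
      pairingR ρ g ≤ pairingR ρ gh ∧
        pairingR ρ gh ≤ pairingR ρ g
          + C * h * (ρ.totalVariation Set.univ).toReal :=
  fem_descent_estimate_circle_general ρ f hfpos Kf hflip
end
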